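/- arXiv:2605.02365 — 2 statements merged into one kernel-verified Lean document; each statement's English description precedes it below -/
import Mathlib

section
/- Let F : Q → ℝⁿ be a C¹ vector field on an open set Q ⊆ ℝⁿ of the form Fᵢ(v) = mᵢ(v)·(u(v) - qᵢ(vᵢ)), where u(v) = 1 - Σₖ vₖ, each mᵢ : Q → ℝ is continuous and strictly positive, and each qᵢ : ℝ → ℝ is continuous. Define V(v) = ½ u(v)² + Σᵢ ∫₀^{vᵢ} qᵢ(r) dr. Then along any solution v(t) of v̇ = F(v) contained in Q, d/dt V(v(t)) = -Σᵢ mᵢ(v(t))·(u(v(t)) - qᵢ(vᵢ(t)))² ≤ 0, with equality at time t if and only if F(v(t)) = 0. -/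
/-!
The partial derivatives of `V` are `∂ᵢV = qᵢ(vᵢ) - u(v)` (since `∂ᵢu = -1`), so along a solution
the chain rule gives `d/dt V = ∑ᵢ (qᵢ - u) · mᵢ (u - qᵢ) = -∑ᵢ mᵢ (u - qᵢ)²`. This is a sum of
squares with positive weights, hence nonpositive, and it vanishes exactly when every `u - qᵢ`
vanishes, i.e. when `F = 0`.
-/

open Finset

theorem hasDerivAt_lyapunov_comp {ι : Type*} [Fintype ι] {q : ι → ℝ → ℝ}
    (hq : ∀ i, Continuous (q i)) {v : ℝ → ι → ℝ} {v' : ι → ℝ} {t : ℝ}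
    (hv : HasDerivAt v v' t) :
    HasDerivAt (fun s => (1 / 2) * (1 - ∑ k, v s k) ^ 2 + ∑ i, ∫ r in (0 : ℝ)..(v s i), q i r)
      (∑ i, (q i (v t i) - (1 - ∑ k, v t k)) * v' i) t := by
  have hvi : ∀ i, HasDerivAt (fun s => v s i) (v' i) t := hasDerivAt_pi.mp hv
  have hu : HasDerivAt (fun s => 1 - ∑ k, v s k) (-∑ k, v' k) t := by
    simpa using (HasDerivAt.fun_sum fun k _ => hvi k).const_sub 1
  have hint : ∀ i, HasDerivAt (fun s => ∫ r in (0 : ℝ)..(v s i), q i r) (q i (v t i) * v' i) t :=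
    fun i => (((hq i).integral_hasStrictDerivAt 0 (v t i)).hasDerivAt.comp t (hvi i) :)
  refine (((hu.fun_pow 2).const_mul (1 / 2 : ℝ)).fun_add
    (HasDerivAt.fun_sum (u := univ) fun i _ => hint i)).congr_deriv ?_
  simp only [sub_mul, sum_sub_distrib, ← mul_sum]
  push_cast
  ring

theorem sum_mul_sq_eq_zero_iff {ι : Type*} [Fintype ι] {w a : ι → ℝ} (hw : ∀ i, 0 < w i) :
    ∑ i, w i * a i ^ 2 = 0 ↔ ∀ i, a i = 0 := by
  rw [sum_eq_zero_iff_of_nonneg fun i _ => mul_nonneg (hw i).le (sq_nonneg _)]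
  simp [(hw _).ne']

theorem stmt4_general {n : ℕ} (Q : Set (Fin n → ℝ))
    (m : Fin n → (Fin n → ℝ) → ℝ) (q : Fin n → ℝ → ℝ)
    (hmpos : ∀ i, ∀ x ∈ Q, 0 < m i x)
    (hq : ∀ i, Continuous (q i))
    (u : (Fin n → ℝ) → ℝ) (hu : ∀ x, u x = 1 - ∑ k, x k)
    (F : (Fin n → ℝ) → Fin n → ℝ)
    (hF : ∀ x i, F x i = m i x * (u x - q i (x i)))
    (V : (Fin n → ℝ) → ℝ)
    (hV : ∀ x, V x = (1 / 2) * (u x) ^ 2 + ∑ i, ∫ r in (0 : ℝ)..(x i), q i r)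
    (v : ℝ → Fin n → ℝ) (hsol : ∀ t, v t ∈ Q ∧ HasDerivAt v (F (v t)) t)
    (t : ℝ) :
    HasDerivAt (fun s => V (v s))
        (-∑ i, m i (v t) * (u (v t) - q i (v t i)) ^ 2) t ∧
    (-∑ i, m i (v t) * (u (v t) - q i (v t i)) ^ 2 ≤ 0) ∧
    ((-∑ i, m i (v t) * (u (v t) - q i (v t i)) ^ 2 = 0) ↔ F (v t) = 0) := by
  obtain ⟨hvQ, hv⟩ := hsol t
  have hmt : ∀ i, 0 < m i (v t) := fun i => hmpos i _ hvQ
  refine ⟨?_, ?_, ?_⟩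
  · have hVv : (fun s => V (v s)) = fun s =>
        (1 / 2) * (1 - ∑ k, v s k) ^ 2 + ∑ i, ∫ r in (0 : ℝ)..(v s i), q i r := by
      simp only [hV, hu]
    rw [hVv]
    convert hasDerivAt_lyapunov_comp hq hv using 1
    simp only [hF, ← hu, ← sum_neg_distrib]
    exact sum_congr rfl fun i _ => by ring
  · exact neg_nonpos.mpr (sum_nonneg fun i _ => mul_nonneg (hmt i).le (sq_nonneg _))
  · rw [neg_eq_zero, sum_mul_sq_eq_zero_iff hmt, funext_iff]
    simp only [hF, Pi.zero_apply, mul_eq_zero, (hmt _).ne', false_or]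

theorem stmt4 {n : ℕ} (Q : Set (Fin n → ℝ)) (hQ : IsOpen Q)
    (m : Fin n → (Fin n → ℝ) → ℝ) (q : Fin n → ℝ → ℝ)
    (hm : ∀ i, ContinuousOn (m i) Q) (hmpos : ∀ i, ∀ x ∈ Q, 0 < m i x)
    (hq : ∀ i, Continuous (q i))
    (u : (Fin n → ℝ) → ℝ) (hu : ∀ x, u x = 1 - ∑ k, x k)
    (F : (Fin n → ℝ) → Fin n → ℝ)
    (hF : ∀ x i, F x i = m i x * (u x - q i (x i)))
    (V : (Fin n → ℝ) → ℝ)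
    (hV : ∀ x, V x = (1 / 2) * (u x) ^ 2 + ∑ i, ∫ r in (0 : ℝ)..(x i), q i r)
    (v : ℝ → Fin n → ℝ) (hsol : ∀ t, v t ∈ Q ∧ HasDerivAt v (F (v t)) t)
    (t : ℝ) :
    HasDerivAt (fun s => V (v s))
        (-∑ i, m i (v t) * (u (v t) - q i (v t i)) ^ 2) t ∧
    (-∑ i, m i (v t) * (u (v t) - q i (v t i)) ^ 2 ≤ 0) ∧
    ((-∑ i, m i (v t) * (u (v t) - q i (v t i)) ^ 2 = 0) ↔ F (v t) = 0) :=
  stmt4_general Q m q hmpos hq u hu F hF V hV v hsol t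
end

section
/- Let x ∈ ℝⁿ with x ≠ 0 and σ : ℝ → ℝ be C¹ with σ(s) = 0 iff s = 0. Then the set ζ_x = {θ = (P, W, b) ∈ ℝ^{n×N} × ℝ^{N×n} × ℝ^N : -x + Pσ(Wx+b) = 0} is an embedded C¹ submanifold of the parameter space ℝ^k (k = N(1+2n)) of codimension n; in particular it has Lebesgue measure zero and its complement is open and dense. -/
/-! The output `P σ(Wx + b)` of the network is linear in `P`, with coefficient vector
`c = σ(Wx + b)`, and `c ≠ 0` on `ζ_x` because `x ≠ 0`. So the partial differential in `P`,
`Q ↦ Q c`, is already onto `ℝⁿ` at every point of `ζ_x`. For each fixed `(W, b)` the slice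
`{P | P c = x}` is an affine subspace missing `0`, hence Lebesgue-null, and Fubini makes `ζ_x`
null; being closed and null, it has dense complement. -/

open MeasureTheory Matrix

theorem surjective_fderiv_of_hasFDerivAt_prodMk_left {𝕜 E F G : Type*}
    [NontriviallyNormedField 𝕜] [NormedAddCommGroup E] [NormedSpace 𝕜 E] [NormedAddCommGroup F]
    [NormedSpace 𝕜 F] [NormedAddCommGroup G] [NormedSpace 𝕜 G] {f : E × F → G} {a : E} {b : F}
    {L : E →L[𝕜] G} (hf : DifferentiableAt 𝕜 f (a, b))
    (hL : HasFDerivAt (fun e => f (e, b)) L a) (hsurj : Function.Surjective L) :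
    Function.Surjective (fderiv 𝕜 f (a, b)) := by
  have hcomp : (fderiv 𝕜 f (a, b)).comp (ContinuousLinearMap.inl 𝕜 E F) = L :=
    (hf.hasFDerivAt.comp a (hasFDerivAt_prodMk_left a b)).unique hL
  rw [← hcomp] at hsurj
  exact Function.Surjective.of_comp (g := ContinuousLinearMap.inl 𝕜 E F) hsurj

theorem MeasureTheory.Measure.addHaar_preimage_singleton {E F : Type*} [NormedAddCommGroup E]
    [NormedSpace ℝ E] [MeasurableSpace E] [BorelSpace E] [FiniteDimensional ℝ E]
    [AddCommGroup F] [Module ℝ F] (μ : Measure E) [μ.IsAddHaarMeasure] (L : E →ₗ[ℝ] F) {y : F}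
    (hy : y ≠ 0) : μ (L ⁻¹' {y}) = 0 := by
  have hpre : L ⁻¹' {y} = (affineSpan ℝ {y}).comap L.toAffineMap := by
    rw [AffineSubspace.coe_comap, AffineSubspace.coe_affineSpan_singleton]
    rfl
  rw [hpre]
  refine addHaar_affineSubspace μ _ fun htop => hy ?_
  have h0 : (0 : E) ∈ (affineSpan ℝ {y}).comap L.toAffineMap :=
    htop ▸ AffineSubspace.mem_top ℝ E 0
  rw [← SetLike.mem_coe, ← hpre] at h0
  simpa using h0.symm

section MulVec

variable {𝕜 ι κ : Type*} [NontriviallyNormedField 𝕜] [CompleteSpace 𝕜] [Fintype ι] [Fintype κ]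

noncomputable def Matrix.mulVecCLM (c : κ → 𝕜) : (ι → κ → 𝕜) →L[𝕜] (ι → 𝕜) :=
  LinearMap.toContinuousLinearMap ((mulVecBilin 𝕜 𝕜).flip c)

@[simp]
theorem Matrix.mulVecCLM_apply (c : κ → 𝕜) (P : ι → κ → 𝕜) : mulVecCLM c P = of P *ᵥ c :=
  rfl

theorem Matrix.mulVecCLM_surjective {c : κ → 𝕜} (hc : c ≠ 0) :
    Function.Surjective (mulVecCLM (ι := ι) c) := by
  classical
  obtain ⟨j, hj⟩ := Function.ne_iff.mp hc
  refine fun y => ⟨fun i => Pi.single j (y i / c j), funext fun i => ?_⟩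
  simpa [mulVec, single_dotProduct] using div_mul_cancel₀ (y i) hj

end MulVec

section ShallowNetwork

variable {ι κ : Type*} [Fintype ι] [Fintype κ]

def hiddenLayer (σ : ℝ → ℝ) (x : ι → ℝ) (p : (κ → ι → ℝ) × (κ → ℝ)) : κ → ℝ :=
  fun j => σ (∑ l, p.1 j l * x l + p.2 j)

def shallowNet (σ : ℝ → ℝ) (θ : (ι → κ → ℝ) × (κ → ι → ℝ) × (κ → ℝ)) (x : ι → ℝ) : ι → ℝ :=
  of θ.1 *ᵥ hiddenLayer σ x θ.2

theorem contDiff_hiddenLayer {σ : ℝ → ℝ} {k : WithTop ℕ∞} (hσ : ContDiff ℝ k σ) (x : ι → ℝ) :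
    ContDiff ℝ k (hiddenLayer (κ := κ) σ x) := by
  unfold hiddenLayer
  fun_prop

theorem contDiff_shallowNet {σ : ℝ → ℝ} {k : WithTop ℕ∞} (hσ : ContDiff ℝ k σ) (x : ι → ℝ) :
    ContDiff ℝ k (fun θ : (ι → κ → ℝ) × (κ → ι → ℝ) × (κ → ℝ) => shallowNet σ θ x) := by
  have := contDiff_hiddenLayer (κ := κ) hσ x
  refine contDiff_pi.2 fun i => ?_
  simp only [shallowNet, mulVec, dotProduct, of_apply]
  fun_prop

theorem hasFDerivAt_shallowNet_fst (σ : ℝ → ℝ) (x : ι → ℝ) (P : ι → κ → ℝ)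
    (p : (κ → ι → ℝ) × (κ → ℝ)) :
    HasFDerivAt (fun P' => shallowNet σ (P', p) x) (mulVecCLM (hiddenLayer σ x p)) P :=
  (mulVecCLM (hiddenLayer σ x p)).hasFDerivAt

theorem hiddenLayer_ne_zero_of_shallowNet_eq {σ : ℝ → ℝ} {x : ι → ℝ} (hx : x ≠ 0)
    {θ : (ι → κ → ℝ) × (κ → ι → ℝ) × (κ → ℝ)} (hθ : shallowNet σ θ x = x) :
    hiddenLayer σ x θ.2 ≠ 0 := by
  intro h
  rw [shallowNet, h, mulVec_zero] at hθ
  exact hx hθ.symm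

theorem surjective_fderiv_shallowNet {σ : ℝ → ℝ} (hσ : ContDiff ℝ 1 σ) {x : ι → ℝ} (hx : x ≠ 0)
    {θ : (ι → κ → ℝ) × (κ → ι → ℝ) × (κ → ℝ)} (hθ : shallowNet σ θ x = x) :
    Function.Surjective (fderiv ℝ (fun θ => -x + shallowNet σ θ x) θ) := by
  rw [fderiv_const_add]
  exact surjective_fderiv_of_hasFDerivAt_prodMk_left
    ((contDiff_shallowNet hσ x).differentiable one_ne_zero _)
    (hasFDerivAt_shallowNet_fst σ x θ.1 θ.2)
    (mulVecCLM_surjective (hiddenLayer_ne_zero_of_shallowNet_eq hx hθ))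

theorem volume_setOf_shallowNet_eq {σ : ℝ → ℝ} (hσ : Continuous σ) {x : ι → ℝ} (hx : x ≠ 0) :
    volume {θ : (ι → κ → ℝ) × (κ → ι → ℝ) × (κ → ℝ) | shallowNet σ θ x = x} = 0 := by
  have hcont := (contDiff_shallowNet (κ := κ) (contDiff_zero.2 hσ) x).continuous
  rw [Measure.volume_eq_prod,
    Measure.prod_apply_symm (isClosed_eq hcont continuous_const).measurableSet]
  have hslice (p : (κ → ι → ℝ) × (κ → ℝ)) :
      volume ((fun P => (P, p)) ⁻¹' {θ | shallowNet σ θ x = x}) = 0 :=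
    Measure.addHaar_preimage_singleton volume
      (mulVecCLM (ι := ι) (hiddenLayer σ x p)).toLinearMap hx
  simp only [hslice, lintegral_zero]

-- `IsOpenPosMeasure` for `volume` on the nested product exceeds the default instance size.
set_option synthInstance.maxSize 256 in
theorem dense_compl_setOf_shallowNet_eq {σ : ℝ → ℝ} (hσ : Continuous σ) {x : ι → ℝ}
    (hx : x ≠ 0) :
    Dense {θ : (ι → κ → ℝ) × (κ → ι → ℝ) × (κ → ℝ) | shallowNet σ θ x = x}ᶜ :=
  interior_eq_empty_iff_dense_compl.mp
    (Measure.interior_eq_empty_of_null (volume_setOf_shallowNet_eq hσ hx))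

end ShallowNetwork

theorem stmt12_general {n N : ℕ} (x : Fin n → ℝ) (hx : x ≠ 0)
    (σ : ℝ → ℝ) (hσ : ContDiff ℝ 1 σ)
    (ζ : Set ((Fin n → Fin N → ℝ) × (Fin N → Fin n → ℝ) × (Fin N → ℝ)))
    (hζ : ζ = {θ : (Fin n → Fin N → ℝ) × (Fin N → Fin n → ℝ) × (Fin N → ℝ) |
      (fun i => -x i + ∑ j, θ.1 i j * σ (∑ l, θ.2.1 j l * x l + θ.2.2 j)) = 0}) :
    (∃ G : ((Fin n → Fin N → ℝ) × (Fin N → Fin n → ℝ) × (Fin N → ℝ)) → Fin n → ℝ,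
        ContDiff ℝ 1 G ∧ ζ = G ⁻¹' {0} ∧
        ∀ θ ∈ ζ, Function.Surjective (fderiv ℝ G θ)) ∧
    volume ζ = 0 ∧ IsOpen ζᶜ ∧ Dense ζᶜ := by
  have hζG : ζ = (fun θ => -x + shallowNet (κ := Fin N) σ θ x) ⁻¹' {0} := hζ
  have hζx : ζ = {θ | shallowNet σ θ x = x} := by
    simp only [hζG, Set.preimage, Set.mem_singleton_iff, neg_add_eq_zero, eq_comm]
  have hG := contDiff_const.add (contDiff_shallowNet (κ := Fin N) hσ x) (f := fun _ => -x)
  have hclosed : IsClosed ζ := hζG ▸ isClosed_singleton.preimage hG.continuous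
  refine ⟨⟨_, hG, hζG, fun θ hθ => surjective_fderiv_shallowNet hσ hx (hζx.subset hθ)⟩, ?_,
    hclosed.isOpen_compl, ?_⟩
  · exact hζx ▸ volume_setOf_shallowNet_eq hσ.continuous hx
  · exact hζx ▸ dense_compl_setOf_shallowNet_eq hσ.continuous hx

theorem stmt12 {n N : ℕ} (x : Fin n → ℝ) (hx : x ≠ 0)
    (σ : ℝ → ℝ) (hσ : ContDiff ℝ 1 σ) (hσ0 : ∀ t : ℝ, σ t = 0 ↔ t = 0)
    (ζ : Set ((Fin n → Fin N → ℝ) × (Fin N → Fin n → ℝ) × (Fin N → ℝ)))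
    (hζ : ζ = {θ : (Fin n → Fin N → ℝ) × (Fin N → Fin n → ℝ) × (Fin N → ℝ) |
      (fun i => -x i + ∑ j, θ.1 i j * σ (∑ l, θ.2.1 j l * x l + θ.2.2 j)) = 0}) :
    (∃ G : ((Fin n → Fin N → ℝ) × (Fin N → Fin n → ℝ) × (Fin N → ℝ)) → Fin n → ℝ,
        ContDiff ℝ 1 G ∧ ζ = G ⁻¹' {0} ∧
        ∀ θ ∈ ζ, Function.Surjective (fderiv ℝ G θ)) ∧
    volume ζ = 0 ∧ IsOpen ζᶜ ∧ Dense ζᶜ :=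
  stmt12_general x hx σ hσ ζ hζ
end
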